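/- Let R be an algebraic complete idealic semiring with idempotent multiplication (a·a = a for all a). Then for a, b ∈ R: V(a) ⊇ V(b) in Spec R implies a ≤ b. Consequently a ↦ V(a) is an order-isomorphism from R onto the lattice of closed subsets of Spec R. -/

import Mathlib

/-!
Multiplication is monotone and below both factors, so for `p` maximal among the elements not
above a compact `x` and `u, v` not below `p`, maximality gives `x ≤ p ⊔ u` and `x ≤ p ⊔ v`,
whence `x = x * x ≤ (p ⊔ u) * (p ⊔ v) ≤ p ⊔ u * v`: idempotence makes such `p` prime. Since
`R` is algebraic, `¬ a ≤ b` yields a compact `x ≤ a` with `¬ x ≤ b`, and Zorn's lemma a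
maximal `p ≥ b` with `¬ x ≤ p`; this prime separates `a` from `b`, so `V` reflects the order.
Surjectivity onto the closed sets holds because `V(a * b) = V(a) ∪ V(b)` and
`V(sSup S) = ⋂ a ∈ S, V(a)`, so the complements of the sets `V(a)` already form a topology.
-/

open CompleteLattice

def IsPrimeElt {R : Type*} [LE R] [Mul R] [One R] (p : R) : Prop :=
  ¬ (1 : R) ≤ p ∧ ∀ a b : R, ¬ a ≤ p → ¬ b ≤ p → ¬ a * b ≤ p

def SpecT (R : Type*) [LE R] [Mul R] [One R] : Type _ := {p : R // IsPrimeElt p}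

instance (R : Type*) [LE R] [Mul R] [One R] : TopologicalSpace (SpecT R) :=
  TopologicalSpace.generateFrom {U : Set (SpecT R) | ∃ a : R, U = {p : SpecT R | ¬ a ≤ p.1}}

def Vset {R : Type*} [LE R] [Mul R] [One R] (a : R) : Set (SpecT R) :=
  {p : SpecT R | a ≤ p.1}

open TopologicalSpace

section Vset

variable {R : Type*} [LE R] [Mul R] [One R]

theorem Vset_one : Vset (1 : R) = ∅ :=
  Set.eq_empty_of_forall_notMem fun p hp => p.2.1 hp

theorem isClosed_Vset (a : R) : IsClosed (Vset a) :=
  isOpen_compl_iff.mp (isOpen_generateFrom_of_mem ⟨a, rfl⟩)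

def closedsVset (a : R) : Closeds (SpecT R) := ⟨Vset a, isClosed_Vset a⟩

end Vset

theorem Vset_sSup {R : Type*} [CompleteLattice R] [Mul R] [One R] (S : Set R) :
    Vset (sSup S) = ⋂ a ∈ S, Vset a := by
  ext p
  simp [Vset]

theorem exists_le_maximal_not_ge {R : Type*} [CompleteLattice R] {x : R}
    (hx : IsCompactElement x) {b : R} (hxb : ¬ x ≤ b) :
    ∃ p, b ≤ p ∧ Maximal (fun q => ¬ x ≤ q) p := by
  refine zorn_le_nonempty₀ {q | ¬ x ≤ q} (fun c hc hchain y hy => ?_) b hxb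
  refine ⟨sSup c, fun hxc => ?_, fun z hz => le_sSup hz⟩
  obtain ⟨z, hzc, hxz⟩ := (isCompactElement_iff_le_of_directed_sSup_le R x).mp hx c
    ⟨y, hy⟩ hchain.directedOn hxc
  exact hc hzc hxz

section IdealicLattice

variable {R : Type*} [CompleteLattice R] [CommMonoid R]

theorem mul_sup_of_mul_sSup (hdist : ∀ (a : R) (S : Set R), a * sSup S = ⨆ b ∈ S, a * b)
    (a b c : R) : a * (b ⊔ c) = a * b ⊔ a * c := by
  simpa only [sSup_pair, iSup_pair] using hdist a {b, c}

theorem mul_le_mul_left_of_mul_sSup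
    (hdist : ∀ (a : R) (S : Set R), a * sSup S = ⨆ b ∈ S, a * b) (a : R) {b c : R}
    (h : b ≤ c) : a * b ≤ a * c := by
  rw [← sup_eq_right.mpr h, mul_sup_of_mul_sSup hdist]
  exact le_sup_left

theorem mul_le_left_of_one_eq_top
    (hdist : ∀ (a : R) (S : Set R), a * sSup S = ⨆ b ∈ S, a * b) (h1 : (1 : R) = ⊤)
    (a b : R) : a * b ≤ a :=
  calc a * b ≤ a * 1 := mul_le_mul_left_of_mul_sSup hdist a (h1 ▸ le_top)
    _ = a := mul_one a

theorem mul_le_right_of_one_eq_top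
    (hdist : ∀ (a : R) (S : Set R), a * sSup S = ⨆ b ∈ S, a * b) (h1 : (1 : R) = ⊤)
    (a b : R) : a * b ≤ b :=
  mul_comm b a ▸ mul_le_left_of_one_eq_top hdist h1 b a

theorem sup_mul_sup_le (hdist : ∀ (a : R) (S : Set R), a * sSup S = ⨆ b ∈ S, a * b)
    (h1 : (1 : R) = ⊤) (p u v : R) : (p ⊔ u) * (p ⊔ v) ≤ p ⊔ u * v := by
  rw [mul_comm, mul_sup_of_mul_sSup hdist, mul_comm (p ⊔ v), mul_comm (p ⊔ v),
    mul_sup_of_mul_sSup hdist, mul_sup_of_mul_sSup hdist]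
  refine sup_le (sup_le ?_ ?_) (sup_le ?_ ?_)
  · exact (mul_le_left_of_one_eq_top hdist h1 p p).trans le_sup_left
  · exact (mul_le_left_of_one_eq_top hdist h1 p v).trans le_sup_left
  · exact (mul_le_right_of_one_eq_top hdist h1 u p).trans le_sup_left
  · exact le_sup_right

theorem isPrimeElt_of_maximal_not_ge
    (hdist : ∀ (a : R) (S : Set R), a * sSup S = ⨆ b ∈ S, a * b) (h1 : (1 : R) = ⊤)
    (hidem : ∀ a : R, a * a = a) {x p : R} (hp : Maximal (fun q => ¬ x ≤ q) p) :
    IsPrimeElt p := by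
  have le_sup_of_not_le : ∀ u, ¬ u ≤ p → x ≤ p ⊔ u := fun u hu => by
    by_contra hx
    exact hu (le_sup_right.trans (hp.2 hx le_sup_left))
  refine ⟨fun h1p => hp.1 (h1 ▸ h1p |>.trans' le_top), fun u v hu hv huv => hp.1 ?_⟩
  calc x = x * x := (hidem x).symm
    _ ≤ (p ⊔ u) * (p ⊔ v) :=
      (mul_le_mul_left_of_mul_sSup hdist x (le_sup_of_not_le v hv)).trans
        (mul_comm x (p ⊔ v) ▸ mul_comm (p ⊔ u) (p ⊔ v) ▸
          mul_le_mul_left_of_mul_sSup hdist (p ⊔ v) (le_sup_of_not_le u hu))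
    _ ≤ p ⊔ u * v := sup_mul_sup_le hdist h1 p u v
    _ = p := sup_eq_left.mpr huv

theorem exists_isPrimeElt_separating
    (hdist : ∀ (a : R) (S : Set R), a * sSup S = ⨆ b ∈ S, a * b) (h1 : (1 : R) = ⊤)
    (halg : ∀ a : R, a = sSup {x : R | IsCompactElement x ∧ x ≤ a})
    (hidem : ∀ a : R, a * a = a) {a b : R} (hab : ¬ a ≤ b) :
    ∃ p : R, IsPrimeElt p ∧ b ≤ p ∧ ¬ a ≤ p := by
  obtain ⟨x, ⟨hx, hxa⟩, hxb⟩ : ∃ x ∈ {x : R | IsCompactElement x ∧ x ≤ a}, ¬ x ≤ b := by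
    by_contra! h
    exact hab (halg a ▸ sSup_le h)
  obtain ⟨p, hbp, hp⟩ := exists_le_maximal_not_ge hx hxb
  exact ⟨p, isPrimeElt_of_maximal_not_ge hdist h1 hidem hp, hbp, fun hap => hp.1 (hxa.trans hap)⟩

theorem le_of_Vset_subset
    (hdist : ∀ (a : R) (S : Set R), a * sSup S = ⨆ b ∈ S, a * b) (h1 : (1 : R) = ⊤)
    (halg : ∀ a : R, a = sSup {x : R | IsCompactElement x ∧ x ≤ a})
    (hidem : ∀ a : R, a * a = a) {a b : R} (h : Vset b ⊆ Vset a) : a ≤ b := by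
  by_contra hab
  obtain ⟨p, hp, hbp, hap⟩ := exists_isPrimeElt_separating hdist h1 halg hidem hab
  exact hap (h (show (⟨p, hp⟩ : SpecT R) ∈ Vset b from hbp))

theorem Vset_mul (hdist : ∀ (a : R) (S : Set R), a * sSup S = ⨆ b ∈ S, a * b)
    (h1 : (1 : R) = ⊤) (a b : R) : Vset (a * b) = Vset a ∪ Vset b := by
  ext p
  refine ⟨fun hp => ?_, ?_⟩
  · by_contra h
    rw [Set.mem_union, not_or] at h
    exact p.2.2 a b h.1 h.2 hp
  · rintro (hp | hp)
    · exact (mul_le_left_of_one_eq_top hdist h1 a b).trans hp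
    · exact (mul_le_right_of_one_eq_top hdist h1 a b).trans hp

theorem exists_compl_Vset_eq_of_isOpen
    (hdist : ∀ (a : R) (S : Set R), a * sSup S = ⨆ b ∈ S, a * b) (h1 : (1 : R) = ⊤)
    {U : Set (SpecT R)} (hU : IsOpen U) : ∃ a : R, (Vset a)ᶜ = U := by
  induction hU with
  | basic V hV =>
    obtain ⟨a, rfl⟩ := hV
    exact ⟨a, rfl⟩
  | univ => exact ⟨1, by rw [Vset_one, Set.compl_empty]⟩
  | inter U V _ _ ihU ihV =>
    obtain ⟨a, rfl⟩ := ihU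
    obtain ⟨b, rfl⟩ := ihV
    exact ⟨a * b, by rw [Vset_mul hdist h1, Set.compl_union]⟩
  | sUnion S _ ih =>
    choose! f hf using ih
    refine ⟨sSup (f '' S), ?_⟩
    rw [Vset_sSup, Set.biInter_image, Set.compl_iInter₂, Set.sUnion_eq_biUnion]
    exact Set.iUnion₂_congr hf

theorem surjective_closedsVset
    (hdist : ∀ (a : R) (S : Set R), a * sSup S = ⨆ b ∈ S, a * b) (h1 : (1 : R) = ⊤) :
    Function.Surjective (closedsVset (R := R)) := fun C => by
  obtain ⟨a, ha⟩ := exists_compl_Vset_eq_of_isOpen hdist h1 C.isClosed.isOpen_compl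
  exact ⟨a, Closeds.ext (compl_inj_iff.mp ha)⟩

end IdealicLattice

theorem stmt17_general {R : Type*} [CompleteLattice R] [CommMonoid R]
    (hdist : ∀ (a : R) (S : Set R), a * sSup S = ⨆ b ∈ S, a * b)
    (h1 : (1 : R) = ⊤)
    (halg : ∀ a : R, a = sSup {x : R | IsCompactElement x ∧ x ≤ a})
    (hidem : ∀ a : R, a * a = a) :
    (∀ a b : R, Vset b ⊆ Vset a → a ≤ b) ∧
    ∃ e : R ≃o (TopologicalSpace.Closeds (SpecT R))ᵒᵈ,
      ∀ a : R, ((OrderDual.ofDual (e a) : TopologicalSpace.Closeds (SpecT R)) : Set (SpecT R))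
        = Vset a := by
  have hV : ∀ a b : R, Vset b ⊆ Vset a → a ≤ b := fun _ _ =>
    le_of_Vset_subset hdist h1 halg hidem
  have hVle : ∀ a b : R, OrderDual.toDual (closedsVset a) ≤ OrderDual.toDual (closedsVset b) ↔
      a ≤ b := fun a b =>
    ⟨hV a b, fun hab _ hp => hab.trans hp⟩
  refine ⟨hV, OrderIso.ofSurjective (OrderEmbedding.ofMapLEIff _ hVle) ?_, fun _ => rfl⟩
  exact OrderDual.toDual.surjective.comp (surjective_closedsVset hdist h1)

/-- Let `R` be an algebraic complete idealic semiring with idempotent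
multiplication. Then `V(b) ⊆ V(a)` implies `a ≤ b`, and consequently `a ↦ V(a)` is an
order-isomorphism from `R` onto the lattice of closed subsets of `Spec R` (ordered by
reverse inclusion). -/
theorem stmt17 {R : Type*} [CompleteLattice R] [CommMonoid R]
    (hdist : ∀ (a : R) (S : Set R), a * sSup S = ⨆ b ∈ S, a * b)
    (h1 : (1 : R) = ⊤)
    (halg : ∀ a : R, a = sSup {x : R | IsCompactElement x ∧ x ≤ a})
    (htop : IsCompactElement (1 : R))
    (hmulcpt : ∀ a b : R, IsCompactElement a → IsCompactElement b → IsCompactElement (a * b))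
    (hidem : ∀ a : R, a * a = a) :
    (∀ a b : R, Vset b ⊆ Vset a → a ≤ b) ∧
    ∃ e : R ≃o (TopologicalSpace.Closeds (SpecT R))ᵒᵈ,
      ∀ a : R, ((OrderDual.ofDual (e a) : TopologicalSpace.Closeds (SpecT R)) : Set (SpecT R))
        = Vset a :=
  stmt17_general hdist h1 halg hidem
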